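/- arXiv:2502.11652 — 5 statements merged into one kernel-verified Lean document; each statement's English description precedes it below -/
import Mathlib

section
/- Let N ≥ 1 and m be natural numbers and let a⁰, a¹, …, a^N be real polynomials with deg a^k ≤ m for every 0 ≤ k ≤ N. Let 𝓛 be the differential operator 𝓛u = Σ_{k=0}^{N} a^k · u^{(k)}. Let i, j be natural numbers, let γ₀, …, γ_N and δ₀, …, δ_N be arbitrary real numbers, and set φ_j = Σ_{p=0}^{N} γ_p · T_{j+p} and ψ_i = Σ_{q=0}^{N} δ_q · T_{N+i+q}^{(N)}. If (i : ℤ) − j > N + m or (j : ℤ) − i > 3N + m, then ∫_{−1}^{1} ψ_i(x) · (𝓛φ_j)(x) · (1 − x²)^{N − 1/2} dx = 0. Consequently, the Petrov–Galerkin coefficient matrix A(i,j) = (ψ_i, 𝓛φ_j)_ω with weight ω(x) = (1 − x²)^{N − 1/2} is banded, with lower bandwidth at most N + m and upper bandwidth at most 3N + m. -/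
/-!
For `k ≥ 1` the derivatives `T_n^{(k)}` satisfy the Sturm–Liouville equation
`((1 - x²)^{k+1/2} T_n^{(k+1)})' = -(n² - k²) (1 - x²)^{k-1/2} T_n^{(k)}`, so integrating by parts
against a polynomial `g` gives `(n² - k²) (T_n^{(k)}, g)_{ω_k} = (T_n^{(k+1)}, g')_{ω_{k+1}}`.
Iterating until `g` is differentiated away shows that `T_n^{(k)}` is `ω_k`-orthogonal to every
polynomial of degree `< n - k`. Since `ω_N = (1 - x²)^{N-k} ω_k`, each term of the matrix entry
vanishes as soon as the degrees are far enough apart: for `i ≫ j` one tests `T^{(N)}_{N+i+q}`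
against `𝓛φ_j`, and for `j ≫ i` one tests each `T^{(k)}_{j+p}` against `ψ_i a^k (1 - x²)^{N-k}`.
The term `k = 0`, whose weight `ω_0` is singular, is reduced to `k = 1, 2` by Chebyshev's equation.
-/

open Polynomial Finset intervalIntegral Polynomial.Chebyshev

theorem continuous_one_sub_sq_rpow {s : ℝ} (hs : 0 ≤ s) :
    Continuous fun x : ℝ => (1 - x ^ 2) ^ s :=
  (by fun_prop : Continuous fun x : ℝ => 1 - x ^ 2).rpow_const fun _ => Or.inr hs

/-- Integration over `[-1, 1]` against the paper's weight `ω_{k+1}`; shifting the index keeps the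
weight continuous for every `k`. -/
noncomputable def weightedIntegral (k : ℕ) : ℝ[X] →ₗ[ℝ] ℝ where
  toFun p := ∫ x in (-1 : ℝ)..1, p.eval x * (1 - x ^ 2) ^ ((k : ℝ) + 1 / 2)
  map_add' p q := by
    have hw := continuous_one_sub_sq_rpow (s := (k : ℝ) + 1 / 2) (by positivity)
    simp only [eval_add, add_mul]
    exact integral_add ((p.continuous.mul hw).intervalIntegrable _ _)
      ((q.continuous.mul hw).intervalIntegrable _ _)
  map_smul' c p := by simp only [eval_smul, smul_eq_mul, mul_assoc, integral_const_mul,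
    RingHom.id_apply]

theorem one_sub_sq_nonneg_of_mem_uIcc {x : ℝ} (hx : x ∈ Set.uIcc (-1) 1) : 0 ≤ 1 - x ^ 2 := by
  rw [Set.uIcc_of_le (by norm_num)] at hx
  nlinarith [hx.1, hx.2]

theorem weightedIntegral_apply (k : ℕ) (p : ℝ[X]) :
    weightedIntegral k p = ∫ x in (-1 : ℝ)..1, p.eval x * (1 - x ^ 2) ^ ((k : ℝ) + 1 / 2) :=
  rfl

theorem weightedIntegral_add_index (k d : ℕ) (p : ℝ[X]) :
    weightedIntegral (k + d) p = weightedIntegral k ((1 - X ^ 2) ^ d * p) := by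
  refine integral_congr fun x hx => ?_
  replace hx := one_sub_sq_nonneg_of_mem_uIcc hx
  have hexp : ((k + d : ℕ) : ℝ) + 1 / 2 = d + ((k : ℝ) + 1 / 2) := by push_cast; ring
  rw [hexp, Real.rpow_add' hx (by positivity), Real.rpow_natCast]
  simp only [eval_mul, eval_pow, eval_sub, eval_one, eval_X]
  ring

/-- `((1 - x²)^(k + 3/2) h)' = ((1 - x²) h' - (2k + 3) x h) ω_{k+1}`, and `(1 - x²)^(k + 3/2)`
vanishes at `±1`. -/
theorem weightedIntegral_one_sub_X_sq_mul_derivative_sub (k : ℕ) (h : ℝ[X]) :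
    weightedIntegral k ((1 - X ^ 2) * derivative h - (2 * k + 3 : ℝ[X]) * X * h) = 0 := by
  set s : ℝ := (k : ℝ) + 3 / 2
  have hF : ∀ x ∈ Set.uIcc (-1 : ℝ) 1, HasDerivAt (fun x => (1 - x ^ 2) ^ s * h.eval x)
      (((1 - X ^ 2) * derivative h - (2 * k + 3 : ℝ[X]) * X * h).eval x *
        (1 - x ^ 2) ^ ((k : ℝ) + 1 / 2)) x := by
    intro x hx
    replace hx := one_sub_sq_nonneg_of_mem_uIcc hx
    have hs : s - 1 = (k : ℝ) + 1 / 2 := by simp only [s]; ring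
    have hsplit : (1 - x ^ 2) ^ s = (1 - x ^ 2) * (1 - x ^ 2) ^ ((k : ℝ) + 1 / 2) := by
      rw [show s = 1 + ((k : ℝ) + 1 / 2) by simp only [s]; ring,
        Real.rpow_add' hx (by positivity), Real.rpow_one]
    have hw := ((hasDerivAt_pow 2 x).const_sub 1).rpow_const (p := s)
      (Or.inr (by simp only [s]; linarith [(k.cast_nonneg : (0 : ℝ) ≤ k)]))
    refine (hw.mul (h.hasDerivAt x)).congr_deriv ?_
    rw [hs, hsplit]
    simp only [eval_sub, eval_mul, eval_one, eval_pow, eval_X, eval_add, eval_ofNat,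
      eval_natCast, s]
    ring
  have hcont : Continuous fun x =>
      ((1 - X ^ 2) * derivative h - (2 * k + 3 : ℝ[X]) * X * h).eval x *
        (1 - x ^ 2) ^ ((k : ℝ) + 1 / 2) :=
    (Polynomial.continuous _).mul (continuous_one_sub_sq_rpow (by positivity))
  rw [weightedIntegral_apply, integral_eq_sub_of_hasDerivAt hF (hcont.intervalIntegrable _ _)]
  simp [s, Real.zero_rpow (by positivity : s ≠ 0)]

theorem weightedIntegral_iterate_derivative_T_mul_recurrence (n : ℤ) (k : ℕ) (g : ℝ[X]) :
    ((n : ℝ) ^ 2 - ((k : ℝ) + 1) ^ 2) * weightedIntegral k (derivative^[k + 1] (T ℝ n) * g) =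
      weightedIntegral (k + 1) (derivative^[k + 2] (T ℝ n) * derivative g) := by
  have hode := one_sub_X_sq_mul_iterate_derivative_T_eq_poly_in_T (R := ℝ) n (k + 1)
  have hpoly : (1 - X ^ 2) * derivative (derivative^[k + 2] (T ℝ n) * g) -
        (2 * k + 3 : ℝ[X]) * X * (derivative^[k + 2] (T ℝ n) * g) =
      (1 - X ^ 2) ^ 1 * (derivative^[k + 2] (T ℝ n) * derivative g) -
        C ((n : ℝ) ^ 2 - ((k : ℝ) + 1) ^ 2) * (derivative^[k + 1] (T ℝ n) * g) := by
    rw [derivative_mul, ← Function.iterate_succ_apply' derivative]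
    simp only [map_sub, map_pow, map_add, C_eq_intCast, map_natCast, map_one] at hode ⊢
    push_cast at hode ⊢
    linear_combination g * hode
  have := weightedIntegral_one_sub_X_sq_mul_derivative_sub k (derivative^[k + 2] (T ℝ n) * g)
  rw [hpoly, map_sub, ← smul_eq_C_mul, map_smul, ← weightedIntegral_add_index,
    smul_eq_mul] at this
  linarith

theorem weightedIntegral_iterate_derivative_T_mul_eq_zero {n : ℤ} {k : ℕ} {g : ℝ[X]}
    (hg : g.natDegree + k + 1 < n.natAbs) :
    weightedIntegral k (derivative^[k + 1] (T ℝ n) * g) = 0 := by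
  suffices ∀ d k (g : ℝ[X]), derivative^[d] g = 0 → d + k + 1 ≤ n.natAbs →
      weightedIntegral k (derivative^[k + 1] (T ℝ n) * g) = 0 from
    this _ k g (iterate_derivative_eq_zero g.natDegree.lt_succ_self) (by omega)
  intro d
  induction d with
  | zero =>
    intro k g hg _
    rw [Function.iterate_zero_apply] at hg
    rw [hg, mul_zero, map_zero]
  | succ d ih =>
    intro k g hg hd
    have hne : (n : ℝ) ^ 2 - ((k : ℝ) + 1) ^ 2 ≠ 0 := by
      have hlt : ((k : ℝ) + 1) ^ 2 < (n.natAbs : ℝ) ^ 2 := by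
        exact_mod_cast Nat.pow_lt_pow_left (by omega) two_ne_zero
      rw [Nat.cast_natAbs, Int.cast_abs, sq_abs] at hlt
      linarith
    have hrec := weightedIntegral_iterate_derivative_T_mul_recurrence n k g
    rw [ih (k + 1) (derivative g) (by rwa [← Function.iterate_succ_apply]) (by omega)] at hrec
    exact (mul_eq_zero.mp hrec).resolve_left hne

theorem natDegree_one_sub_X_sq_pow_mul_le (d : ℕ) (g : ℝ[X]) :
    ((1 - X ^ 2) ^ d * g).natDegree ≤ 2 * d + g.natDegree := by
  have h2 : (1 - X ^ 2 : ℝ[X]).natDegree ≤ 2 :=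
    (natDegree_sub_le _ _).trans (by simp)
  have := (natDegree_pow_le (p := (1 - X ^ 2 : ℝ[X])) (n := d)).trans
    (Nat.mul_le_mul_left d h2)
  exact natDegree_mul_le.trans (by omega)

theorem weightedIntegral_iterate_derivative_succ_T_mul_eq_zero {n : ℤ} {N k : ℕ} {g : ℝ[X]}
    (hk : k ≤ N) (hg : g.natDegree + 2 * N + 1 < n.natAbs + k) :
    weightedIntegral N (derivative^[k + 1] (T ℝ n) * g) = 0 := by
  obtain ⟨d, rfl⟩ := Nat.exists_eq_add_of_le hk
  rw [weightedIntegral_add_index, mul_left_comm]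
  have := natDegree_one_sub_X_sq_pow_mul_le d g
  exact weightedIntegral_iterate_derivative_T_mul_eq_zero (by omega)

/-- Chebyshev's equation `n² T = x T' - (1 - x²) T''` trades `T` for its first two
derivatives, which are orthogonal for the weights `ω_{N+1}` and `ω_{N+2}`. -/
theorem weightedIntegral_T_mul_eq_zero {n : ℤ} {N : ℕ} {g : ℝ[X]}
    (hg : g.natDegree + 2 * N + 2 < n.natAbs) :
    weightedIntegral N (T ℝ n * g) = 0 := by
  have hode := one_sub_X_sq_mul_iterate_derivative_T_eq_poly_in_T (R := ℝ) n 0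
  simp only [Function.iterate_zero_apply, Nat.cast_zero, zero_add] at hode
  have hpoly : C ((n : ℝ) ^ 2) * (T ℝ n * g) =
      derivative^[1] (T ℝ n) * (X * g) - (1 - X ^ 2) ^ 1 * (derivative^[2] (T ℝ n) * g) := by
    simp only [map_pow, C_eq_intCast]
    linear_combination g * hode
  have hX : (X * g).natDegree ≤ g.natDegree + 1 := natDegree_mul_le.trans (by simp [add_comm])
  have h1 : weightedIntegral N (derivative^[1] (T ℝ n) * (X * g)) = 0 :=
    weightedIntegral_iterate_derivative_succ_T_mul_eq_zero (k := 0) (N.zero_le) (by omega)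
  have h2 : weightedIntegral (N + 1) (derivative^[2] (T ℝ n) * g) = 0 :=
    weightedIntegral_iterate_derivative_succ_T_mul_eq_zero (k := 1) (by omega) (by omega)
  have h := congrArg (weightedIntegral N) hpoly
  rw [← smul_eq_C_mul, map_smul, map_sub, ← weightedIntegral_add_index, h1, h2, sub_zero,
    smul_eq_mul] at h
  have hn : (n : ℝ) ≠ 0 := by exact_mod_cast (by omega : n ≠ 0)
  exact (mul_eq_zero.mp h).resolve_left (pow_ne_zero 2 hn)

theorem natDegree_sum_smul_iterate_derivative_T_le (j : ℤ) (d k : ℕ) (c : Fin (d + 1) → ℝ) :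
    (∑ p : Fin (d + 1), c p • derivative^[k] (T ℝ (j + (p : ℕ)))).natDegree ≤
      j.natAbs + d - k :=
  natDegree_sum_le_of_forall_le _ _ fun p _ => (natDegree_smul_le _ _).trans <|
    (natDegree_iterate_derivative _ _).trans <| by rw [natDegree_T]; omega

theorem natDegree_sum_mul_iterate_derivative_le {N m : ℕ} {a : Fin (N + 1) → ℝ[X]}
    (ha : ∀ k, (a k).natDegree ≤ m) (u : ℝ[X]) :
    (∑ k : Fin (N + 1), a k * derivative^[k] u).natDegree ≤ m + u.natDegree :=
  natDegree_sum_le_of_forall_le _ _ fun k _ => natDegree_mul_le.trans <|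
    add_le_add (ha k) ((natDegree_iterate_derivative u k).trans (Nat.sub_le _ _))

/-- The Petrov–Galerkin coefficient matrix `A(i,j) = (ψ_i, 𝓛 φ_j)_ω` with the
ultraspherical weight `ω(x) = (1 - x²)^(N - 1/2)` is banded: the entry vanishes
whenever `i - j > N + m` or `j - i > 3N + m`. -/
theorem pg_coefficient_matrix_banded
    (N m : ℕ) (hN : 1 ≤ N) (a : Fin (N + 1) → ℝ[X])
    (ha : ∀ k, (a k).degree ≤ (m : ℕ)) (i j : ℕ)
    (γ δ : Fin (N + 1) → ℝ) (φ ψ : ℝ[X])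
    (hφ : φ = ∑ p : Fin (N + 1), γ p • Polynomial.Chebyshev.T ℝ ((j : ℤ) + (p : ℕ)))
    (hψ : ψ = ∑ q : Fin (N + 1),
      δ q • derivative^[N] (Polynomial.Chebyshev.T ℝ ((N : ℤ) + (i : ℕ) + (q : ℕ))))
    (hij : (i : ℤ) - (j : ℤ) > (N : ℤ) + m ∨ (j : ℤ) - (i : ℤ) > 3 * (N : ℤ) + m) :
    ∫ x in (-1 : ℝ)..1,
      ψ.eval x * (∑ k : Fin (N + 1), a k * derivative^[(k : ℕ)] φ).eval x *
        (1 - x ^ 2) ^ ((N : ℝ) - 1 / 2) = 0 := by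
  obtain ⟨n, rfl⟩ : ∃ n, N = n + 1 := ⟨N - 1, by omega⟩
  have hexp : ((n + 1 : ℕ) : ℝ) - 1 / 2 = (n : ℝ) + 1 / 2 := by push_cast; ring
  simp only [hexp, ← eval_mul, ← weightedIntegral_apply]
  have ha_deg (k) : (a k).natDegree ≤ m := natDegree_le_iff_degree_le.mpr (ha k)
  have hφ_deg : φ.natDegree ≤ j + (n + 1) := by
    rw [hφ]
    exact (natDegree_sum_smul_iterate_derivative_T_le j (n + 1) 0 γ).trans (by omega)
  have hψ_deg : ψ.natDegree ≤ i + (n + 1) := by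
    rw [hψ]
    exact (natDegree_sum_smul_iterate_derivative_T_le _ (n + 1) (n + 1) δ).trans (by omega)
  rcases hij with hij | hij
  · have hL_deg := natDegree_sum_mul_iterate_derivative_le ha_deg φ
    rw [hψ, sum_mul, map_sum]
    refine sum_eq_zero fun q _ => ?_
    rw [smul_mul_assoc, map_smul,
      weightedIntegral_iterate_derivative_T_mul_eq_zero (by omega), smul_zero]
  · have hexpand : ψ * ∑ k : Fin (n + 1 + 1), a k * derivative^[k] φ =
        ∑ k : Fin (n + 1 + 1), ∑ p : Fin (n + 1 + 1),
          γ p • (derivative^[k] (T ℝ ((j : ℤ) + (p : ℕ))) * (ψ * a k)) := by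
      simp only [hφ, mul_sum, iterate_derivative_sum, iterate_derivative_smul, mul_smul_comm]
      exact sum_congr rfl fun k _ => sum_congr rfl fun p _ => by congr 1; ring
    rw [hexpand, map_sum]
    refine sum_eq_zero fun k _ => ?_
    rw [map_sum]
    refine sum_eq_zero fun p _ => ?_
    have hg_deg : (ψ * a k).natDegree ≤ i + (n + 1) + m :=
      natDegree_mul_le.trans (by have := ha_deg k; omega)
    rw [map_smul]
    obtain ⟨_ | k, hk⟩ := k
    · rw [Function.iterate_zero_apply, weightedIntegral_T_mul_eq_zero (by omega), smul_zero]
    · rw [weightedIntegral_iterate_derivative_succ_T_mul_eq_zero (by omega) (by omega), smul_zero]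
end

section
/- For all natural numbers N ≥ 1, l and i, if i > l, or (i : ℤ) < l − 2N, or l − i is odd, then ∫_{−1}^{1} T_l(x) · T_{N+i}^{(N)}(x) · (1 − x²)^{N − 1/2} dx = 0. In other words, T_l is weighted-orthogonal to T_{N+i}^{(N)} unless i ∈ {l, l−2, …, l−2N}. (This expresses the band structure of the composed conversion operator S_{N−1}⋯S_0 from Chebyshev coefficients to N-th ultraspherical coefficients.) -/
/-!
Substituting `x = cos θ` turns the integral into `∫₀^π cos (lθ) H_N(θ) dθ` with `n = N + i` and
`H_k(θ) = sin θ ^ (2k) · T_n^{(k)}(cos θ)`. The Chebyshev differential equation, differentiated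
`k` times, says that `G_k(θ) = sin θ ^ (2k+1) · T_n^{(k+1)}(cos θ)` has derivative `(n² - k²) H_k`,
while `H_{k+1} = sin θ · G_k`. As `cos (mθ) sin θ = (sin ((m+1)θ) - sin ((m-1)θ)) / 2` and `G_k`
vanishes at `0` and `π`, integrating by parts expresses `∫ cos (mθ) H_{k+1}` through
`∫ cos ((m ± 1)θ) H_k`. By induction on `k`, starting from the orthogonality of cosines,
`cos (mθ)` is orthogonal to `H_k` unless `|m| ∈ {n - k, n - k + 2, …, n + k}`.
-/

open Polynomial Polynomial.Chebyshev Real intervalIntegral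

theorem integral_mul_one_sub_sq_rpow (f : ℝ → ℝ) (k : ℕ) :
    ∫ x in -1..1, f x * (1 - x ^ 2) ^ ((k : ℝ) - 1 / 2) =
      ∫ θ in 0..π, f (cos θ) * sin θ ^ (2 * k) := by
  have hk : (k : ℝ) - 1 / 2 ≠ 0 := by
    intro h
    have : (2 * k : ℝ) = 1 := by linarith
    norm_cast at this
    omega
  have hw : ∀ t : ℝ, 0 ≤ t → t ^ ((k : ℝ) - 1 / 2) = t ^ k * √t⁻¹ := by
    intro t ht
    rcases ht.eq_or_lt with rfl | ht
    · rw [Real.zero_rpow hk]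
      simp
    · rw [Real.rpow_sub ht, Real.rpow_natCast, Real.sqrt_eq_rpow, Real.inv_rpow ht.le,
        div_eq_mul_inv]
  calc ∫ x in -1..1, f x * (1 - x ^ 2) ^ ((k : ℝ) - 1 / 2)
      = ∫ x in -1..1, f x * (1 - x ^ 2) ^ k * √(1 - x ^ 2)⁻¹ := by
        refine integral_congr fun x hx => ?_
        rw [Set.uIcc_of_le (by norm_num), Set.mem_Icc] at hx
        rw [hw _ (by nlinarith), mul_assoc]
    _ = ∫ θ in 0..π, f (cos θ) * sin θ ^ (2 * k) := by
        simp_rw [← integral_measureT, integral_measureT_eq_integral_cos, ← sin_sq, pow_mul]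

theorem integral_cos_mul_cos_eq_zero {a b : ℤ} (h₁ : a + b ≠ 0) (h₂ : a - b ≠ 0) :
    ∫ θ in 0..π, cos (a * θ) * cos (b * θ) = 0 := by
  have h := integral_eval_T_real_mul_eval_T_real_measureT a b
  rw [integral_eval_T_real_measureT_of_ne_zero h₁, integral_eval_T_real_measureT_of_ne_zero h₂,
    integral_measureT_eq_integral_cos] at h
  simpa [T_real_cos] using h

theorem integral_cos_mul_deriv_eq_mul_integral_sin_mul {G g : ℝ → ℝ} {a b : ℝ} (c : ℝ)
    (hG : ∀ x ∈ Set.uIcc a b, HasDerivAt G (g x) x)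
    (hg : IntervalIntegrable g MeasureTheory.volume a b) (ha : G a = 0) (hb : G b = 0) :
    ∫ x in a..b, cos (c * x) * g x = c * ∫ x in a..b, sin (c * x) * G x := by
  have hcos : ∀ x ∈ Set.uIcc a b, HasDerivAt (fun x => cos (c * x)) (-sin (c * x) * c) x :=
    fun x _ => by simpa using ((hasDerivAt_id x).const_mul c).cos
  rw [integral_mul_deriv_eq_deriv_mul hcos hG (Continuous.intervalIntegrable (by fun_prop) _ _) hg,
    ha, hb, mul_zero, mul_zero, sub_zero, zero_sub, ← intervalIntegral.integral_const_mul,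
    ← intervalIntegral.integral_neg]
  congr 1 with x
  ring

/-- `(1 - x ^ 2) ^ k * T_n^{(k)}(x)` at `x = cos θ`. -/
noncomputable def weightedDerivT (n : ℤ) (k : ℕ) (θ : ℝ) : ℝ :=
  sin θ ^ (2 * k) * (derivative^[k] (T ℝ n)).eval (cos θ)

theorem continuous_weightedDerivT (n : ℤ) (k : ℕ) : Continuous (weightedDerivT n k) := by
  unfold weightedDerivT
  fun_prop

theorem hasDerivAt_sin_pow_mul_iterate_derivative_T (n : ℤ) (k : ℕ) (θ : ℝ) :
    HasDerivAt (fun t => sin t ^ (2 * k + 1) * (derivative^[k + 1] (T ℝ n)).eval (cos t))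
      ((n ^ 2 - k ^ 2) * weightedDerivT n k θ) θ := by
  have hs : HasDerivAt (fun t => sin t ^ (2 * k + 1))
      ((2 * k + 1 : ℕ) * sin θ ^ (2 * k) * cos θ) θ := by
    simpa using (hasDerivAt_sin θ).fun_pow (2 * k + 1)
  have hp : HasDerivAt (fun t => (derivative^[k + 1] (T ℝ n)).eval (cos t))
      ((derivative^[k + 2] (T ℝ n)).eval (cos θ) * -sin θ) θ := by
    rw [Function.iterate_succ_apply' derivative (k + 1)]
    exact (Polynomial.hasDerivAt _ _).comp θ (hasDerivAt_cos θ)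
  refine (hs.mul hp).congr_deriv ?_
  have hode := one_sub_X_sq_mul_iterate_derivative_T_eval n k (cos θ)
  rw [← sin_sq] at hode
  unfold weightedDerivT
  push_cast
  linear_combination -sin θ ^ (2 * k) * hode

def OffBand (n k : ℕ) (m : ℤ) : Prop :=
  (n + k : ℤ) < |m| ∨ |m| < (n - k : ℤ) ∨ Odd (m - n - k)

theorem OffBand.add_one {n k : ℕ} {m : ℤ} (h : OffBand n (k + 1) m) : OffBand n k (m + 1) := by
  simp only [OffBand, Int.odd_iff] at h ⊢
  push_cast at h
  rcases abs_cases m with ⟨_, _⟩ | ⟨_, _⟩ <;> rcases abs_cases (m + 1) with ⟨_, _⟩ | ⟨_, _⟩ <;>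
    omega

theorem OffBand.sub_one {n k : ℕ} {m : ℤ} (h : OffBand n (k + 1) m) : OffBand n k (m - 1) := by
  simp only [OffBand, Int.odd_iff] at h ⊢
  push_cast at h
  rcases abs_cases m with ⟨_, _⟩ | ⟨_, _⟩ <;> rcases abs_cases (m - 1) with ⟨_, _⟩ | ⟨_, _⟩ <;>
    omega

theorem integral_cos_mul_weightedDerivT_eq_zero {n k : ℕ} {m : ℤ} (h : OffBand n k m) :
    ∫ θ in 0..π, cos (m * θ) * weightedDerivT n k θ = 0 := by
  induction k generalizing m with
  | zero =>
    have hm : m + n ≠ 0 ∧ m - n ≠ 0 := by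
      simp only [OffBand, Int.odd_iff] at h
      rcases abs_cases m with ⟨_, _⟩ | ⟨_, _⟩ <;> omega
    simpa [weightedDerivT, T_real_cos] using integral_cos_mul_cos_eq_zero hm.1 hm.2
  | succ k ih =>
    set G := fun t => sin t ^ (2 * k + 1) * (derivative^[k + 1] (T ℝ n)).eval (cos t)
    have hG : Continuous G := by fun_prop
    have hsin : ∀ a : ℤ, OffBand n k a → ∫ θ in 0..π, sin (a * θ) * G θ = 0 := by
      intro a ha
      rcases eq_or_ne a 0 with rfl | ha0
      · simp
      have hparts := integral_cos_mul_deriv_eq_mul_integral_sin_mul (a := 0) (b := π) a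
        (fun θ _ => hasDerivAt_sin_pow_mul_iterate_derivative_T n k θ)
        ((continuous_const.mul (continuous_weightedDerivT n k)).intervalIntegrable _ _)
        (by simp) (by simp)
      simp_rw [mul_left_comm (cos _), intervalIntegral.integral_const_mul, ih ha, mul_zero]
        at hparts
      exact (mul_eq_zero.1 hparts.symm).resolve_left (Int.cast_ne_zero.2 ha0)
    have hprod : ∀ θ, cos (m * θ) * weightedDerivT n (k + 1) θ
        = (sin ((m + 1 : ℤ) * θ) * G θ - sin ((m - 1 : ℤ) * θ) * G θ) / 2 := by
      intro θ
      simp only [weightedDerivT, G]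
      push_cast
      rw [add_mul, sub_mul, one_mul, sin_add, sin_sub]
      ring
    simp_rw [hprod]
    rw [intervalIntegral.integral_div, intervalIntegral.integral_sub
      ((by fun_prop : Continuous _).intervalIntegrable _ _)
      ((by fun_prop : Continuous _).intervalIntegrable _ _),
      hsin _ h.add_one, hsin _ h.sub_one, sub_zero, zero_div]

theorem chebyshev_conversion_banded_general
    (N l i : ℕ)
    (h : i > l ∨ (i : ℤ) < (l : ℤ) - 2 * N ∨ Odd ((l : ℤ) - (i : ℤ))) :
    ∫ x in (-1 : ℝ)..1,
      (Polynomial.Chebyshev.T ℝ (l : ℤ)).eval x *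
        (derivative^[N] (Polynomial.Chebyshev.T ℝ ((N : ℤ) + (i : ℤ)))).eval x *
        (1 - x ^ 2) ^ ((N : ℝ) - 1 / 2) = 0 := by
  have hband : OffBand (N + i) N l := by
    simp only [OffBand, abs_of_nonneg (Int.natCast_nonneg l), Int.odd_iff] at h ⊢
    omega
  rw [integral_mul_one_sub_sq_rpow
    (fun x => (T ℝ l).eval x * (derivative^[N] (T ℝ (N + i))).eval x)]
  refine (integral_congr fun θ _ => ?_).trans (integral_cos_mul_weightedDerivT_eq_zero hband)
  rw [T_real_cos, weightedDerivT]
  push_cast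
  ring

/-- Band structure of the composed conversion operator from Chebyshev coefficients to
`N`-th ultraspherical coefficients: `T_l` is weighted-orthogonal to `T_{N+i}^{(N)}`
unless `i ∈ {l, l-2, …, l-2N}`. -/
theorem chebyshev_conversion_banded
    (N l i : ℕ) (hN : 1 ≤ N)
    (h : i > l ∨ (i : ℤ) < (l : ℤ) - 2 * N ∨ Odd ((l : ℤ) - (i : ℤ))) :
    ∫ x in (-1 : ℝ)..1,
      (Polynomial.Chebyshev.T ℝ (l : ℤ)).eval x *
        (derivative^[N] (Polynomial.Chebyshev.T ℝ ((N : ℤ) + (i : ℤ)))).eval x *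
        (1 - x ^ 2) ^ ((N : ℝ) - 1 / 2) = 0 :=
  chebyshev_conversion_banded_general N l i h
end

section
/- Let k ≥ 1 and m be natural numbers and let a be a real polynomial with deg a ≤ m. Then for every natural number j, the polynomial a · T_{k+j}^{(k)} lies in the real linear span of the set { T_{k+i}^{(k)} : i a natural number with j − m ≤ (i : ℤ) ≤ j + m }. (Since T_{k+i}^{(k)} is a nonzero scalar multiple of the ultraspherical polynomial C_i^{(k)}, this says that the multiplication operator 𝓜_k[a] acting on k-th ultraspherical coefficients is banded with lower and upper bandwidths (m, m), which is the bandwidth assertion of the paper's Lemma 3.1.) -/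
/-! For `k = l + 1` we have `T_n^{(l+1)} = n · U_{n-1}^{(l)}`, so up to nonzero scalars the
family `T_{k+i}^{(k)}` is `w_i = U_{l+i}^{(l)}`. Differentiating `U_{n+1} = 2X U_n - U_{n-1}` and
using `U'_{n+1} - U'_{n-1} = 2(n+1) U_n` (the derivative of `2T_{n+1} = U_{n+1} - U_{n-1}`) gives,
for every `n : ℤ`, the three-term recurrence
`2(n+1) X U_n^{(l)} = (n-l+1) U_{n+1}^{(l)} + (n+l+1) U_{n-1}^{(l)}`.
Hence multiplication by `X` is tridiagonal on the `w_i` (the missing neighbour `U_{l-1}^{(l)}`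
of `w_0` vanishes for degree reasons), multiplication by `X^t` widens the band by `t`, and a
polynomial of degree `≤ m` is a combination of the `X^t` with `t ≤ m`. -/

open Polynomial

namespace Polynomial

def bandSpan (R : Type*) {M : Type*} [Semiring R] [AddCommMonoid M] [Module R M] (v : ℕ → M)
    (j w : ℕ) : Submodule R M :=
  Submodule.span R {q | ∃ i : ℕ, (j : ℤ) - w ≤ (i : ℤ) ∧ (i : ℤ) ≤ (j : ℤ) + w ∧ q = v i}

theorem bandSpan_smul_eq {K M : Type*} [DivisionRing K] [AddCommGroup M] [Module K M]
    (v : ℕ → M) {c : ℕ → K} (hc : ∀ i, c i ≠ 0) (j w : ℕ) :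
    bandSpan K (fun i => c i • v i) j w = bandSpan K v j w := by
  apply le_antisymm <;> refine Submodule.span_le.mpr ?_ <;> rintro _ ⟨i, hlo, hhi, rfl⟩
  · exact Submodule.smul_mem _ _ (Submodule.subset_span ⟨i, hlo, hhi, rfl⟩)
  · rw [← inv_smul_smul₀ (hc i) (v i)]
    exact Submodule.smul_mem _ _ (Submodule.subset_span ⟨i, hlo, hhi, rfl⟩)

section Banded

variable {R : Type*} [CommSemiring R] {v : ℕ → R[X]}

theorem bandSpan_mono {i j s t : ℕ} (hlo : (j : ℤ) - t ≤ i - s) (hhi : (i : ℤ) + s ≤ j + t) :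
    bandSpan R v i s ≤ bandSpan R v j t :=
  Submodule.span_mono fun _ ⟨i', h1, h2, hq⟩ => ⟨i', by omega, by omega, hq⟩

theorem X_pow_mul_mem_bandSpan (hX : ∀ i, X * v i ∈ bandSpan R v i 1) (j t : ℕ) :
    X ^ t * v j ∈ bandSpan R v j t := by
  induction t with
  | zero =>
    rw [pow_zero, one_mul]
    exact Submodule.subset_span ⟨j, by omega, by omega, rfl⟩
  | succ t ih =>
    have hstep : bandSpan R v j t ≤ (bandSpan R v j (t + 1)).comap (LinearMap.mulLeft R X) := by
      refine Submodule.span_le.mpr ?_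
      rintro _ ⟨i, hlo, hhi, rfl⟩
      exact bandSpan_mono (by omega) (by omega) (hX i)
    rw [pow_succ', mul_assoc]
    exact hstep ih

theorem mul_mem_bandSpan_of_degree_le (hX : ∀ i, X * v i ∈ bandSpan R v i 1) {a : R[X]} {m : ℕ}
    (ha : a.degree ≤ m) (j : ℕ) : a * v j ∈ bandSpan R v j m := by
  classical
  have hdeg : degreeLE R m ≤ (bandSpan R v j m).comap (LinearMap.mulRight R (v j)) := by
    rw [degreeLE_eq_span_X_pow, Submodule.span_le]
    intro _ hp
    obtain ⟨t, ht, rfl⟩ := Finset.mem_image.mp hp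
    have ht : t ≤ m := Nat.lt_succ_iff.mp (Finset.mem_range.mp ht)
    exact bandSpan_mono (by omega) (by omega) (X_pow_mul_mem_bandSpan hX j t)
  exact hdeg (mem_degreeLE.mpr ha)

end Banded

namespace Chebyshev

section CommRing
variable {R : Type*} [CommRing R]

theorem iterate_derivative_succ_T (k : ℕ) (n : ℤ) :
    derivative^[k + 1] (T R n) = (n : R) • derivative^[k] (U R (n - 1)) := by
  rw [Function.iterate_succ_apply, T_derivative_eq_U, ← C_eq_intCast, ← smul_eq_C_mul,
    iterate_derivative_smul]

theorem iterate_derivative_U_add_one_sub (k : ℕ) (n : ℤ) :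
    derivative^[k + 1] (U R (n + 1)) - derivative^[k + 1] (U R (n - 1)) =
      (2 * ((n : R) + 1)) • derivative^[k] (U R n) := by
  have h := two_mul_T_eq_U_sub_U R (n - 1)
  rw [show n - 1 + 2 = n + 1 by ring] at h
  rw [← iterate_derivative_sub, ← h, two_mul, iterate_map_add, iterate_derivative_succ_T,
    add_sub_cancel_right]
  push_cast
  module

theorem smul_X_mul_iterate_derivative_U (k : ℕ) (n : ℤ) :
    (2 * ((n : R) + 1)) • (X * derivative^[k] (U R n)) =
      ((n : R) - k + 1) • derivative^[k] (U R (n + 1)) +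
        ((n : R) + k + 1) • derivative^[k] (U R (n - 1)) := by
  induction k with
  | zero =>
    rw [Function.iterate_zero_apply, Function.iterate_zero_apply, Function.iterate_zero_apply,
      U_add_one, mul_assoc, two_mul (X * U R n), Nat.cast_zero]
    module
  | succ k ih =>
    have h := congrArg derivative ih
    have hd := iterate_derivative_U_add_one_sub (R := R) k n
    simp only [derivative_smul, derivative_add, derivative_mul, derivative_X, one_mul] at h
    rw [Function.iterate_succ_apply', Function.iterate_succ_apply', Function.iterate_succ_apply']
    rw [Function.iterate_succ_apply', Function.iterate_succ_apply'] at hd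
    push_cast
    linear_combination (norm := module) h + hd

end CommRing

theorem iterate_derivative_U_sub_one_eq_zero {R : Type*} [CommRing R] [IsDomain R]
    [NeZero (2 : R)] (l : ℕ) : derivative^[l] (U R ((l : ℤ) - 1)) = 0 := by
  rcases l with _ | l
  · simp
  · refine iterate_derivative_eq_zero ?_
    rw [natDegree_U]
    omega

variable {K : Type*} [Field K] [CharZero K]

theorem X_mul_iterate_derivative_U_mem_bandSpan (l i : ℕ) :
    X * derivative^[l] (U K ((l : ℤ) + i)) ∈
      bandSpan K (fun i : ℕ => derivative^[l] (U K ((l : ℤ) + i))) i 1 := by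
  have hne : (2 * ((((l : ℤ) + i : ℤ) : K) + 1)) ≠ 0 := by norm_cast
  rw [← inv_smul_smul₀ hne (X * _), smul_X_mul_iterate_derivative_U]
  refine Submodule.smul_mem _ _
    (Submodule.add_mem _ (Submodule.smul_mem _ _ ?_) (Submodule.smul_mem _ _ ?_))
  · exact Submodule.subset_span ⟨i + 1, by omega, by omega, by simp [add_assoc]⟩
  · rcases i with _ | i
    · rw [Nat.cast_zero, add_zero, iterate_derivative_U_sub_one_eq_zero]
      exact Submodule.zero_mem _
    · exact Submodule.subset_span ⟨i, by omega, by omega, by push_cast; ring_nf⟩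

end Chebyshev

end Polynomial

open Polynomial.Chebyshev

/-- The multiplication operator `𝓜_k[a]` acting on `k`-th ultraspherical coefficients is
banded with bandwidths `(m, m)`: for `deg a ≤ m`, the product `a · T_{k+j}^{(k)}` lies in
the span of the `T_{k+i}^{(k)}` with `j - m ≤ i ≤ j + m`. -/
theorem ultraspherical_multiplication_banded
    (k m : ℕ) (hk : 1 ≤ k) (a : ℝ[X]) (ha : a.degree ≤ (m : ℕ)) (j : ℕ) :
    a * derivative^[k] (Polynomial.Chebyshev.T ℝ ((k : ℤ) + (j : ℤ))) ∈
      Submodule.span ℝ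
        { q : ℝ[X] | ∃ i : ℕ, (j : ℤ) - m ≤ (i : ℤ) ∧ (i : ℤ) ≤ (j : ℤ) + m ∧
            q = derivative^[k] (Polynomial.Chebyshev.T ℝ ((k : ℤ) + (i : ℤ))) } := by
  obtain ⟨l, rfl⟩ : ∃ l, k = l + 1 := ⟨k - 1, by omega⟩
  have hT : ∀ i : ℕ, derivative^[l + 1] (T ℝ (((l + 1 : ℕ) : ℤ) + i)) =
      ((l + 1 + i : ℕ) : ℝ) • derivative^[l] (U ℝ ((l : ℤ) + i)) := fun i => by
    rw [iterate_derivative_succ_T]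
    push_cast
    ring_nf
  change _ ∈ bandSpan ℝ (fun i : ℕ => derivative^[l + 1] (T ℝ (((l + 1 : ℕ) : ℤ) + i))) j m
  simp_rw [hT]
  rw [bandSpan_smul_eq _ (fun i => by positivity), mul_smul_comm]
  exact Submodule.smul_mem _ _ (mul_mem_bandSpan_of_degree_le
    (X_mul_iterate_derivative_U_mem_bandSpan l) ha j)
end

section
/- Let m be a natural number and a₀, …, a_m real numbers, and let a(x) = Σ_{j=0}^{m} a_j · T_j(x); extend the coefficients by a_j := 0 for j < 0 or j > m. Then for every natural number k, a(x) · U_k(x) = Σ_{i=0}^{k+m} ½ · (a_{i−k} + a_{k−i} − a_{i+k+2}) · U_i(x). (This is the Toeplitz-minus-Hankel structure of the multiplication operator 𝓜₁[a] acting on Chebyshev-U coefficients, equation (3.2) of the paper.) -/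
/-!
Multiplying the product formula `2 T_j U_k = U_{k+j} + U_{k-j}` by `a_j / 2` and summing over `j`
gives the Toeplitz part; for `j > k` the reflection `U_{-n-2} = -U_n` turns `U_{k-j}` into
`-U_{j-k-2}`, which is the Hankel part. The coefficient of `U_i` is then read off by writing
`a_x = Σ_j a_j δ_{x,j}` and exchanging the two sums.
-/

open Polynomial Finset Polynomial.Chebyshev

theorem Finset.sum_range_ite_eq_intCast {M : Type*} [AddCommMonoid M] (n : ℕ) (p : ℕ → Prop)
    [DecidablePred p] (t : ℤ) (hp : ∀ i : ℕ, p i ↔ (i : ℤ) = t) (f : ℤ → M) :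
    ∑ i ∈ range n, (if p i then f i else 0) = if 0 ≤ t ∧ t < n then f t else 0 := by
  by_cases ht : 0 ≤ t
  · lift t to ℕ using ht
    simp only [hp, Nat.cast_inj, sum_ite_eq', mem_range, Nat.cast_nonneg, true_and, Nat.cast_lt]
  · rw [if_neg (by omega)]
    exact sum_eq_zero fun i _ => if_neg fun h => by have := (hp i).1 h; omega

theorem Finset.sum_range_mul_ite_eq_of_support {R : Type*} [Semiring R] {m : ℕ} {a : ℤ → R}
    (ha : ∀ j : ℤ, j < 0 ∨ (m : ℤ) < j → a j = 0) (x : ℤ) :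
    ∑ j ∈ range (m + 1), a j * (if x = j then 1 else 0) = a x := by
  simp only [mul_ite, mul_one, mul_zero]
  rw [sum_range_ite_eq_intCast _ _ x fun j => eq_comm]
  split_ifs with hx
  · rfl
  · exact (ha x (by omega)).symm

namespace Polynomial.Chebyshev

variable (R : Type*) [CommRing R]

theorem T_mul_U (j k : ℤ) : 2 * T R j * U R k = U R (k + j) + U R (k - j) := by
  induction j using Polynomial.Chebyshev.induct with
  | zero => rw [T_zero, mul_one, add_zero, sub_zero, two_mul]
  | one => rw [T_one]; linear_combination -U_sub_one R k
  | add_two n ih1 ih2 =>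
    have h₁ := T_add_two R n
    have h₂ := U_add_two R (k + n)
    have h₃ := U_sub_two R (k - n)
    linear_combination (norm := ring_nf) 2 * U R k * h₁ + 2 * (X : R[X]) * ih1 - ih2 - h₂ - h₃
  | neg_add_one n ih1 ih2 =>
    have h₁ := T_add_two R (-n - 1)
    have h₂ := U_add_two R (k + n - 1)
    have h₃ := U_sub_two R (k - n + 1)
    linear_combination (norm := ring_nf) 2 * U R k * h₁ + 2 * (X : R[X]) * ih1 - ih2 - h₂ - h₃

theorem U_eq_ite_sub_ite (n : ℤ) :
    U R n = (if 0 ≤ n then U R n else 0) - (if 0 ≤ -n - 2 then U R (-n - 2) else 0) := by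
  rcases lt_trichotomy n (-1) with h | rfl | h
  · rw [if_neg (by omega), if_pos (by omega), U_neg_sub_two, zero_sub, neg_neg]
  · simp
  · rw [if_pos (by omega), if_neg (by omega), sub_zero]

theorem two_mul_T_mul_U_eq_sum_range {k m j : ℕ} (hj : j ≤ m) :
    2 * T R j * U R k = ∑ i ∈ range (k + m + 1),
      ((if (i : ℤ) - k = j then 1 else 0) + (if (k : ℤ) - i = j then 1 else 0)
        - (if (i : ℤ) + k + 2 = j then 1 else 0) : R) • U R i := by
  simp only [add_smul, sub_smul, ite_smul, one_smul, zero_smul, sum_add_distrib, sum_sub_distrib]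
  rw [sum_range_ite_eq_intCast _ _ (k + j) (fun i => by omega),
    sum_range_ite_eq_intCast _ _ (k - j) (fun i => by omega),
    sum_range_ite_eq_intCast _ _ (-(k - j) - 2) (fun i => by omega),
    if_pos (by omega)]
  have h₁ : (k : ℤ) - j < (k + m + 1 : ℕ) := by omega
  have h₂ : -((k : ℤ) - j) - 2 < (k + m + 1 : ℕ) := by omega
  simp only [h₁, h₂, and_true]
  rw [add_sub_assoc, ← U_eq_ite_sub_ite, T_mul_U]

end Polynomial.Chebyshev

/-- Toeplitz-minus-Hankel structure of the multiplication operator `𝓜₁[a]` acting on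
Chebyshev-`U` coefficients: if `a(x) = Σ_{j=0}^m a_j T_j(x)` (with `a_j = 0` for `j < 0`
or `j > m`), then `a(x) U_k(x) = Σ_{i=0}^{k+m} ½ (a_{i-k} + a_{k-i} - a_{i+k+2}) U_i(x)`. -/
theorem chebyshevU_multiplication_toeplitz_hankel
    (m : ℕ) (a : ℤ → ℝ) (ha : ∀ j : ℤ, j < 0 ∨ (m : ℤ) < j → a j = 0) (k : ℕ) :
    (∑ j ∈ Finset.range (m + 1), a j • Polynomial.Chebyshev.T ℝ (j : ℤ)) *
        Polynomial.Chebyshev.U ℝ (k : ℤ)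
      = ∑ i ∈ Finset.range (k + m + 1),
          ((1 / 2 : ℝ) * (a ((i : ℤ) - k) + a ((k : ℤ) - i) - a ((i : ℤ) + k + 2))) •
            Polynomial.Chebyshev.U ℝ (i : ℤ) := by
  have halve (j : ℕ) : a j • T ℝ j * U ℝ k = ((1 / 2) * a j) • (2 * T ℝ j * U ℝ k) := by
    rw [mul_assoc, two_mul, ← two_smul ℝ, smul_smul, smul_mul_assoc]
    congr 1
    ring
  have coeff (i : ℕ) : (1 / 2 : ℝ) * (a ((i : ℤ) - k) + a ((k : ℤ) - i) - a ((i : ℤ) + k + 2))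
      = ∑ j ∈ range (m + 1), (1 / 2 * a j) * ((if (i : ℤ) - k = j then 1 else 0)
          + (if (k : ℤ) - i = j then 1 else 0) - (if (i : ℤ) + k + 2 = j then 1 else 0)) := by
    simp only [mul_assoc, ← mul_sum, mul_add, mul_sub, sum_add_distrib, sum_sub_distrib,
      sum_range_mul_ite_eq_of_support ha]
  calc _ = ∑ j ∈ range (m + 1), ((1 / 2) * a j) • (2 * T ℝ j * U ℝ k) := by
        rw [sum_mul]; exact sum_congr rfl fun j _ => halve j
    _ = _ := by
      simp only [coeff, sum_smul]
      rw [sum_comm]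
      refine sum_congr rfl fun j hj => ?_
      rw [two_mul_T_mul_U_eq_sum_range ℝ (Nat.lt_succ_iff.mp (mem_range.mp hj)), smul_sum]
      simp only [smul_smul]
end

section
/- For all natural numbers k and p, the value at x = 1 of the p-th derivative of the Chebyshev polynomial of the first kind T_k equals ∏_{i=0}^{p−1} (k² − i²)/(2i + 1). -/
open Polynomial Finset

/-- Boundary value at `x = 1` of the `p`-th derivative of the Chebyshev polynomial `T_k`:
`T_k^{(p)}(1) = ∏_{i=0}^{p-1} (k² - i²)/(2i + 1)`. -/
theorem chebyshev_deriv_eval_one (k p : ℕ) :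
    (derivative^[p] (Polynomial.Chebyshev.T ℝ (k : ℤ))).eval 1
      = ∏ i ∈ Finset.range p, (((k : ℝ) ^ 2 - (i : ℝ) ^ 2) / (2 * (i : ℝ) + 1)) := by
  simp [Chebyshev.iterate_derivative_T_eval_one_eq_div, prod_div_distrib]
end
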